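/- Local soundness of the cyclic while rule: let B be a Boolean condition, C₀ and C' programs, P and Q assertions, and n a natural number. If states σ and σ' satisfy σ' ⊨ Q, ⟨(while B do C₀);C', σ⟩ →ⁿ ⟨ε, σ'⟩, and σ ⊭ P, then n > 0 and either (a) ⟦B⟧σ = ⊥, σ ⊭ (¬B → P), and ⟨C', σ⟩ →^{n−1} ⟨ε, σ'⟩, or (b) ⟦B⟧σ = ⊤, σ ⊭ (B → P), and ⟨C₀;(while B do C₀);C', σ⟩ →^{n−1} ⟨ε, σ'⟩. -/

import Mathlib

namespace RevHoare

/-! ### States -/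

abbrev Var := ℕ
abbrev State := Var → ℕ

/-- state update `σ[x ↦ c]`. -/
def upd (σ : State) (x : Var) (c : ℕ) : State := fun y => if y = x then c else σ y

/-! ### Expressions -/

inductive Expr : Type where
  | var : Var → Expr
  | const : ℕ → Expr
  | app : {k : ℕ} → ((Fin k → ℕ) → ℕ) → (Fin k → Expr) → Expr

namespace Expr

/-- `⟦E⟧σ`. -/
def eval : Expr → State → ℕ
  | var x, σ => σ x
  | const n, _ => n
  | app f es, σ => f fun i => (es i).eval σ

/-- `E[x := E']` (substitution of `E'` for `x` in the last argument). -/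
def subst (x : Var) (E' : Expr) : Expr → Expr
  | var y => if y = x then E' else var y
  | const n => const n
  | app f es => app f fun i => subst x E' (es i)

/-- variables occurring in an expression. -/
def fv : Expr → Finset Var
  | var y => {y}
  | const _ => ∅
  | app _ es => Finset.univ.biUnion fun i => (es i).fv

end Expr

/-! ### Boolean conditions -/

inductive BExpr : Type where
  | rel : {k : ℕ} → ((Fin k → ℕ) → Prop) → (Fin k → Expr) → BExpr
  | eq : Expr → Expr → BExpr
  | le : Expr → Expr → BExpr
  | not : BExpr → BExpr
  | and : BExpr → BExpr → BExpr
  | or : BExpr → BExpr → BExpr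

namespace BExpr

/-- `B.holds σ` means `⟦B⟧σ = ⊤`; `¬ B.holds σ` means `⟦B⟧σ = ⊥`. -/
def holds : BExpr → State → Prop
  | rel R es, σ => R fun i => (es i).eval σ
  | eq E₁ E₂, σ => E₁.eval σ = E₂.eval σ
  | le E₁ E₂, σ => E₁.eval σ ≤ E₂.eval σ
  | not B, σ => ¬ holds B σ
  | and B₁ B₂, σ => holds B₁ σ ∧ holds B₂ σ
  | or B₁ B₂, σ => holds B₁ σ ∨ holds B₂ σ

/-- `B[x := E]`. -/
def subst (x : Var) (E : Expr) : BExpr → BExpr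
  | rel R es => rel R fun i => Expr.subst x E (es i)
  | eq E₁ E₂ => eq (Expr.subst x E E₁) (Expr.subst x E E₂)
  | le E₁ E₂ => le (Expr.subst x E E₁) (Expr.subst x E E₂)
  | not B => not (subst x E B)
  | and B₁ B₂ => and (subst x E B₁) (subst x E B₂)
  | or B₁ B₂ => or (subst x E B₁) (subst x E B₂)

/-- variables occurring in a Boolean condition. -/
def vars : BExpr → Finset Var
  | rel _ es => Finset.univ.biUnion fun i => (es i).fv
  | eq E₁ E₂ => E₁.fv ∪ E₂.fv
  | le E₁ E₂ => E₁.fv ∪ E₂.fv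
  | not B => vars B
  | and B₁ B₂ => vars B₁ ∪ vars B₂
  | or B₁ B₂ => vars B₁ ∪ vars B₂

end BExpr

/-! ### Assertions -/

inductive Assertion : Type where
  | base : BExpr → Assertion
  | not : Assertion → Assertion
  | or : Assertion → Assertion → Assertion
  | and : Assertion → Assertion → Assertion
  | imp : Assertion → Assertion → Assertion
  | ex : Var → Assertion → Assertion
  | all : Var → Assertion → Assertion

namespace Assertion

/-- `P.sat σ` means `σ ⊨ P`. -/
def sat : Assertion → State → Prop
  | base B, σ => B.holds σ
  | not P, σ => ¬ sat P σ
  | or P Q, σ => sat P σ ∨ sat Q σ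
  | and P Q, σ => sat P σ ∧ sat Q σ
  | imp P Q, σ => sat P σ → sat Q σ
  | ex x P, σ => ∃ c : ℕ, sat P (upd σ x c)
  | all x P, σ => ∀ c : ℕ, sat P (upd σ x c)

/-- all variables occurring in `P` (free or bound, including binders). -/
def allVars : Assertion → Finset Var
  | base B => B.vars
  | not P => allVars P
  | or P Q => allVars P ∪ allVars Q
  | and P Q => allVars P ∪ allVars Q
  | imp P Q => allVars P ∪ allVars Q
  | ex y P => insert y (allVars P)
  | all y P => insert y (allVars P)

/-- naive renaming of the free occurrences of the variable `x` to the variable `z`. -/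
def rename (x z : Var) : Assertion → Assertion
  | base B => base (B.subst x (Expr.var z))
  | not P => not (rename x z P)
  | or P Q => or (rename x z P) (rename x z Q)
  | and P Q => and (rename x z P) (rename x z Q)
  | imp P Q => imp (rename x z P) (rename x z Q)
  | ex y P => if y = x then ex y P else ex y (rename x z P)
  | all y P => if y = x then all y P else all y (rename x z P)

/-- size (number of assertion constructors). -/
def asize : Assertion → ℕ
  | base _ => 1
  | not P => asize P + 1
  | or P Q => asize P + asize Q + 1
  | and P Q => asize P + asize Q + 1
  | imp P Q => asize P + asize Q + 1
  | ex _ P => asize P + 1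
  | all _ P => asize P + 1

theorem asize_rename (x z : Var) : ∀ P : Assertion, (rename x z P).asize = P.asize := by
  intro P
  induction P with
  | base B => rfl
  | not P ih => simp [rename, asize, ih]
  | or P Q ih1 ih2 => simp [rename, asize, ih1, ih2]
  | and P Q ih1 ih2 => simp [rename, asize, ih1, ih2]
  | imp P Q ih1 ih2 => simp [rename, asize, ih1, ih2]
  | ex y P ih => by_cases h : y = x <;> simp [rename, asize, h, ih]
  | all y P ih => by_cases h : y = x <;> simp [rename, asize, h, ih]

/-- a variable not belonging to the finite set `s`. -/
def fresh (s : Finset Var) : Var := s.sup id + 1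

/-- capture-avoiding substitution `P[x := E]` (bound variables are renamed afresh). -/
def subst (x : Var) (E : Expr) : Assertion → Assertion
  | base B => base (B.subst x E)
  | not P => not (subst x E P)
  | or P Q => or (subst x E P) (subst x E Q)
  | and P Q => and (subst x E P) (subst x E Q)
  | imp P Q => imp (subst x E P) (subst x E Q)
  | ex y P =>
      let z := fresh (E.fv ∪ insert x (allVars P))
      ex z (subst x E (rename y z P))
  | all y P =>
      let z := fresh (E.fv ∪ insert x (allVars P))
      all z (subst x E (rename y z P))
termination_by P => P.asize
decreasing_by all_goals simp [asize, asize_rename] <;> omega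

end Assertion

/-- semantic entailment `P ⊨ Q` between assertions. -/
def entails (P Q : Assertion) : Prop := ∀ σ : State, P.sat σ → Q.sat σ

/-! ### Programs and small-step semantics -/

/-- non-empty commands `C'` of the grammar. -/
inductive Cmd : Type where
  | assign : Var → Expr → Cmd
  | seq : Cmd → Cmd → Cmd
  | while : BExpr → Option Cmd → Cmd
  | choice : Option Cmd → Option Cmd → Cmd

/-- programs: `none` is the empty program ε, giving the grammar `C ::= ε | C'`. -/
abbrev Prog := Option Cmd

/-- sequential composition `C₀;C₁` of programs, identifying `ε;C` and `C;ε` with `C`. -/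
def Prog.comp : Prog → Prog → Prog
  | none, C => C
  | some c, none => some c
  | some c₀, some c₁ => some (Cmd.seq c₀ c₁)

mutual
/-- variables occurring in a (non-empty) command. -/
def Cmd.vars : Cmd → Finset Var
  | .assign x E => insert x E.fv
  | .seq c₀ c₁ => c₀.vars ∪ c₁.vars
  | .while B C => B.vars ∪ progVars C
  | .choice C₀ C₁ => progVars C₀ ∪ progVars C₁
/-- variables occurring in a program. -/
def progVars : Prog → Finset Var
  | none => ∅
  | some c => c.vars
end

/-- the small-step relation `⟨C,σ⟩ → ⟨C',σ'⟩` on configurations. -/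
inductive Step : Prog × State → Prog × State → Prop where
  | assign {x E σ} : Step (some (.assign x E), σ) (none, upd σ x (E.eval σ))
  | whileTrue {B C σ} : B.holds σ →
      Step (some (.while B C), σ) (Prog.comp C (some (.while B C)), σ)
  | whileFalse {B C σ} : ¬ B.holds σ → Step (some (.while B C), σ) (none, σ)
  | seq {c₀ c₁ σ C₀' σ'} : Step (some c₀, σ) (C₀', σ') →
      Step (some (.seq c₀ c₁), σ) (Prog.comp C₀' (some c₁), σ')
  | choiceL {C₀ C₁ σ} : Step (some (.choice C₀ C₁), σ) (C₀, σ)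
  | choiceR {C₀ C₁ σ} : Step (some (.choice C₀ C₁), σ) (C₁, σ)

/-- `→*`, the reflexive-transitive closure of `→`. -/
def Steps : Prog × State → Prog × State → Prop := Relation.ReflTransGen Step

/-- `→ⁿ`, an `n`-step execution. -/
inductive StepN : ℕ → Prog × State → Prog × State → Prop where
  | refl (c) : StepN 0 c c
  | step {c c' c'' n} : Step c c' → StepN n c' c'' → StepN (n + 1) c c''

/-! ### Partial reverse Hoare triples -/

/-- validity of the partial reverse Hoare triple `[P] C [Q]`. -/
def Valid (P : Assertion) (C : Prog) (Q : Assertion) : Prop :=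
  ∀ σ σ' : State, Q.sat σ' → Steps (C, σ) (none, σ') → P.sat σ

/-- the weakest pre-condition set `WPR(C,Q)`. -/
def WPR (C : Prog) (Q : Assertion) : Set State :=
  {σ | ∃ σ', Steps (C, σ) (none, σ') ∧ Q.sat σ'}

/-! ### The ordinary proof system PRHL -/

/-- provability in the ordinary proof system `PRHL`. -/
inductive PRHL : Assertion → Prog → Assertion → Prop where
  | ax (Q) : PRHL Q none Q
  | assign (Q x E) : PRHL (Q.subst x E) (some (.assign x E)) Q
  | seq {P R Q C₀ C₁} : PRHL P C₀ R → PRHL R C₁ Q → PRHL P (Prog.comp C₀ C₁) Q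
  | cons {P P' Q Q' C} : PRHL P C Q → entails P P' → entails Q' Q → PRHL P' C Q'
  | or {P Q C₀ C₁} : PRHL P C₀ Q → PRHL P C₁ Q → PRHL P (some (.choice C₀ C₁)) Q
  | whileR {P B C} : PRHL ((Assertion.base B).imp P) C P →
      PRHL P (some (.while B C)) ((Assertion.not (.base B)).imp P)

/-! ### The cyclic proof system CPRHL -/

/-- a partial reverse Hoare triple `[pre] prog [post]`. -/
structure Triple : Type where
  pre : Assertion
  prog : Prog
  post : Assertion

/-- one application of a CPRHL rule other than (Cons): conclusion and its list of premises. -/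
inductive CRule : Triple → List Triple → Prop where
  | ax (Q) : CRule ⟨Q, none, Q⟩ []
  | assign (P Q x E C) :
      CRule ⟨P.subst x E, Prog.comp (some (.assign x E)) C, Q⟩ [⟨P, C, Q⟩]
  | or (P Q C₀ C₁ C) :
      CRule ⟨P, Prog.comp (some (.choice C₀ C₁)) C, Q⟩
        [⟨P, Prog.comp C₀ C, Q⟩, ⟨P, Prog.comp C₁ C, Q⟩]
  | whileR (P Q B C C') :
      CRule ⟨P, Prog.comp (some (.while B C)) C', Q⟩
        [⟨(Assertion.not (.base B)).imp P, C', Q⟩,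
         ⟨(Assertion.base B).imp P, Prog.comp C (Prog.comp (some (.while B C)) C'), Q⟩]

/-- one application of the CPRHL rule (Cons): conclusion `t` from premise `t'`. -/
def ConsRule (t t' : Triple) : Prop :=
  t.prog = t'.prog ∧ entails t'.pre t.pre ∧ entails t.post t'.post

/-- A `CPRHL` pre-proof (with open leaves), presented as a finite proof graph:
back-link leaves are identified with their companions, which carry the same label.
`isOpen v = true` marks the proper open leaves, which carry no rule.
At every other node either the rule (Cons) (when `isCons v = true`) or one of the
remaining rules is applied, whose premises are the labels of the children. -/
structure CPreProof : Type where
  size : ℕ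
  root : Fin size
  label : Fin size → Triple
  isOpen : Fin size → Bool
  isCons : Fin size → Bool
  children : Fin size → List (Fin size)
  open_ok : ∀ v, isOpen v = true → children v = []
  cons_ok : ∀ v, isOpen v = false → isCons v = true →
      ∃ w, children v = [w] ∧ ConsRule (label v) (label w)
  rule_ok : ∀ v, isOpen v = false → isCons v = false →
      CRule (label v) ((children v).map label)

/-- the global soundness condition: along every infinite path (in the tree unfolding
induced by the back-links), rules other than (Cons) are applied infinitely often. -/
def CPreProof.GlobalSound (D : CPreProof) : Prop :=
  ∀ f : ℕ → Fin D.size, (∀ i, f (i + 1) ∈ D.children (f i)) →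
    ∀ N, ∃ i, N ≤ i ∧ D.isCons (f i) = false

/-- provability in the cyclic proof system `CPRHL`: there is a CPRHL proof
(a globally sound pre-proof without proper open leaves) of the given triple. -/
def CProvable (t : Triple) : Prop :=
  ∃ D : CPreProof, D.GlobalSound ∧ D.label D.root = t ∧ ∀ v, D.isOpen v = false


theorem comp_none (a : Prog) : Prog.comp a none = a := by cases a <;> rfl

theorem step_comp {a₀ : Cmd} {X A' : Prog} {σ σ' : State}
    (h : Step (some a₀, σ) (A', σ')) :
    Step (Prog.comp (some a₀) X, σ) (Prog.comp A' X, σ') := by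
  cases X with
  | none => simp only [comp_none]; exact h
  | some x => exact Step.seq h

theorem step_comp_inv {a₀ : Cmd} {X D : Prog} {σ σ' : State}
    (h : Step (Prog.comp (some a₀) X, σ) (D, σ')) :
    ∃ A', Step (some a₀, σ) (A', σ') ∧ D = Prog.comp A' X := by
  cases X with
  | none => exact ⟨D, h, (comp_none D).symm⟩
  | some x =>
    cases h with
    | seq h0 => exact ⟨_, h0, rfl⟩

theorem stepN_reassoc {b c : Prog} : ∀ {n : ℕ} (a : Prog) {σ σ' : State},
    StepN n (Prog.comp (Prog.comp a b) c, σ) (none, σ') →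
    StepN n (Prog.comp a (Prog.comp b c), σ) (none, σ') := by
  intro n
  induction n with
  | zero =>
    intro a σ σ' h
    cases a <;> cases b <;> cases c <;> cases h <;> exact StepN.refl _
  | succ n ih =>
    intro a σ σ' h
    cases a with
    | none => exact h
    | some a₀ =>
      cases h with
      | step h1 hs =>
        rename_i cfg
        obtain ⟨D, σd⟩ := cfg
        obtain ⟨s₀, hs₀⟩ : ∃ s₀, Prog.comp (some a₀) b = some s₀ := by
          cases b <;> exact ⟨_, rfl⟩
        rw [hs₀] at h1
        obtain ⟨A₁, hA₁, rfl⟩ := step_comp_inv h1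
        rw [← hs₀] at hA₁
        obtain ⟨A₂, hA₂, rfl⟩ := step_comp_inv hA₁
        exact StepN.step (step_comp hA₂ (X := Prog.comp b c)) (ih A₂ hs)

/-- local soundness of the cyclic while rule: if `σ' ⊨ Q`,
`⟨(while B do C₀);C', σ⟩ →ⁿ ⟨ε, σ'⟩`, and `σ ⊭ P`, then `n > 0` and either
(a) `⟦B⟧σ = ⊥`, `σ ⊭ (¬B → P)`, and `⟨C', σ⟩ →^{n−1} ⟨ε, σ'⟩`, or
(b) `⟦B⟧σ = ⊤`, `σ ⊭ (B → P)`, and `⟨C₀;(while B do C₀);C', σ⟩ →^{n−1} ⟨ε, σ'⟩`. -/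
theorem cyclic_while_local_sound (B : BExpr) (C₀ C' : Prog) (P Q : Assertion)
    (n : ℕ) (σ σ' : State) (hQ : Q.sat σ')
    (hrun : StepN n (Prog.comp (some (.while B C₀)) C', σ) (none, σ'))
    (hP : ¬ P.sat σ) :
    0 < n ∧
      ((¬ B.holds σ ∧ ¬ ((Assertion.not (.base B)).imp P).sat σ ∧
          StepN (n - 1) (C', σ) (none, σ')) ∨
       (B.holds σ ∧ ¬ ((Assertion.base B).imp P).sat σ ∧
          StepN (n - 1) (Prog.comp C₀ (Prog.comp (some (.while B C₀)) C'), σ) (none, σ'))) := by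
  cases C' with
  | none =>
    cases hrun with
    | step h hs =>
      cases h with
      | whileTrue hB =>
        refine ⟨Nat.succ_pos _, Or.inr ⟨hB, ?_, by simpa [comp_none] using hs⟩⟩
        intro hsat; exact hP (hsat hB)
      | whileFalse hB =>
        refine ⟨Nat.succ_pos _, Or.inl ⟨hB, ?_, by simpa using hs⟩⟩
        intro hsat; exact hP (hsat hB)
  | some c' =>
    cases hrun with
    | step h hs =>
      cases h with
      | seq h0 =>
        cases h0 with
        | whileTrue hB =>
          refine ⟨Nat.succ_pos _, Or.inr ⟨hB, ?_, ?_⟩⟩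
          · intro hsat; exact hP (hsat hB)
          · simpa using stepN_reassoc C₀ hs
        | whileFalse hB =>
          refine ⟨Nat.succ_pos _, Or.inl ⟨hB, ?_, by simpa [Prog.comp] using hs⟩⟩
          intro hsat; exact hP (hsat hB)

end RevHoare
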